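/- Proportional-splitting bound (core of the proof of Proposition 1). Let m be a discrete semimeasure and for each string z set M z := ∑' u : List Bool, m (z ++ u). Define a : List Bool → ℝ≥0∞ recursively by a [] = 1 and, for every string z and every bit b, a (z ++ [b]) = a z * (M (z ++ [b]) / (M (z ++ [false]) + M (z ++ [true]))) (quotients in ℝ≥0∞, so in particular 0/0 = 0). Then for every infinite binary sequence ω : ℕ → Bool, ∑' n : ℕ, m(ω↾n) / a(ω↾n) ≤ M []. -/

import Mathlib

/-!
Along ω the weights telescope. For z = ω↾n and D = M (z0) + M (z1), so that M z = m z + D, the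
recursion for `a` gives M (z b) / a (z b) = D / a z, hence m z / a z + M (z b) / a (z b) = M z / a z
(an inequality when M (z b) = 0, the second term then being 0 / 0 = 0). So the partial sums of
m (ω↾k) / a (ω↾k) over k < n, plus M (ω↾n) / a (ω↾n), never exceed M [] / a [] = M []. The
cancellation needs D < ∞, which holds once M [] < ∞; otherwise there is nothing to prove.
-/

open scoped ENNReal NNReal

def prefixSeq (ω : ℕ → Bool) (n : ℕ) : List Bool := (List.range n).map ω

def DiscreteSemimeasure (m : List Bool → ℝ≥0∞) : Prop := ∑' x : List Bool, m x ≤ 1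

def List.equivSumProd (α : Type*) : List α ≃ Unit ⊕ α × List α where
  toFun
    | [] => .inl ()
    | b :: v => .inr (b, v)
  invFun
    | .inl () => []
    | .inr (b, v) => b :: v
  left_inv l := by cases l <;> rfl
  right_inv s := by rcases s with _ | ⟨b, v⟩ <;> rfl

theorem ENNReal.tsum_list_eq_nil_add {α : Type*} (f : List α → ℝ≥0∞) :
    ∑' u, f u = f [] + ∑' (b) (u), f (b :: u) := by
  rw [← (List.equivSumProd α).symm.tsum_eq, ENNReal.summable.tsum_sum ENNReal.summable,
    tsum_fintype, Fintype.sum_unique, ENNReal.tsum_prod']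
  rfl

theorem Finset.sum_range_add_le_of_add_le {α : Type*} [AddCommMonoid α] [PartialOrder α]
    [IsOrderedAddMonoid α] {f g : ℕ → α} (h : ∀ n, f n + g (n + 1) ≤ g n) (n : ℕ) :
    ∑ k ∈ range n, f k + g n ≤ g 0 := by
  induction n with
  | zero => simp
  | succ n ih =>
    calc ∑ k ∈ range (n + 1), f k + g (n + 1) = ∑ k ∈ range n, f k + (f n + g (n + 1)) := by
          rw [sum_range_succ, add_assoc]
      _ ≤ ∑ k ∈ range n, f k + g n := by gcongr; exact h n
      _ ≤ g 0 := ih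

namespace ENNReal

theorem div_mul_div_cancel_left {x D : ℝ≥0∞} (A : ℝ≥0∞) (hx0 : x ≠ 0) (hx : x ≠ ∞)
    (hD0 : D ≠ 0) (hD : D ≠ ∞) : x / (A * (x / D)) = D / A := by
  rw [div_eq_mul_inv x D, mul_left_comm, ← div_eq_mul_inv, ← mul_one x, mul_assoc, one_mul,
    ENNReal.mul_div_mul_left _ _ hx0 hx, one_div, ENNReal.inv_div (.inl hD) (.inl hD0)]

theorem div_add_div_mul_div_le (s A : ℝ≥0∞) {x D : ℝ≥0∞} (hxD : x ≤ D) (hD : D ≠ ∞) :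
    s / A + x / (A * (x / D)) ≤ (s + D) / A := by
  rcases eq_or_ne x 0 with rfl | hx0
  · simpa using ENNReal.div_le_div_right le_self_add A
  have hD0 : D ≠ 0 := (pos_of_ne_zero hx0 |>.trans_le hxD).ne'
  rw [div_mul_div_cancel_left A hx0 (ne_top_of_le_ne_top hD hxD) hD0 hD, ENNReal.div_add_div_same]

end ENNReal

theorem prefixSeq_zero (ω : ℕ → Bool) : prefixSeq ω 0 = [] := rfl

theorem prefixSeq_succ (ω : ℕ → Bool) (n : ℕ) : prefixSeq ω (n + 1) = prefixSeq ω n ++ [ω n] := by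
  simp [prefixSeq, List.range_succ]

section ExtensionMass

variable (m : List Bool → ℝ≥0∞)

noncomputable def extensionMass (z : List Bool) : ℝ≥0∞ := ∑' u, m (z ++ u)

theorem extensionMass_eq_add (z : List Bool) :
    extensionMass m z = m z + (extensionMass m (z ++ [false]) + extensionMass m (z ++ [true])) := by
  simp only [extensionMass, ENNReal.tsum_list_eq_nil_add (fun u => m (z ++ u)), tsum_bool,
    List.append_nil, List.append_assoc, List.singleton_append]

theorem extensionMass_le_nil (z : List Bool) : extensionMass m z ≤ extensionMass m [] :=
  ENNReal.tsum_comp_le_tsum_of_injective (fun _ _ => List.append_cancel_left) m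

theorem extensionMass_child_le (z : List Bool) (b : Bool) :
    extensionMass m (z ++ [b]) ≤ extensionMass m (z ++ [false]) + extensionMass m (z ++ [true]) := by
  cases b
  exacts [le_self_add, le_add_self]

theorem div_add_extensionMass_div_le {a : List Bool → ℝ≥0∞}
    (ha : ∀ (z : List Bool) (b : Bool), a (z ++ [b]) = a z * (extensionMass m (z ++ [b]) /
      (extensionMass m (z ++ [false]) + extensionMass m (z ++ [true]))))
    (htop : extensionMass m [] ≠ ∞) (z : List Bool) (b : Bool) :
    m z / a z + extensionMass m (z ++ [b]) / a (z ++ [b]) ≤ extensionMass m z / a z := by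
  have hchildren : extensionMass m (z ++ [false]) + extensionMass m (z ++ [true]) ≠ ∞ :=
    ne_top_of_le_ne_top htop <| calc
      _ ≤ extensionMass m z := (extensionMass_eq_add m z).symm ▸ le_add_self
      _ ≤ extensionMass m [] := extensionMass_le_nil m z
  rw [ha, extensionMass_eq_add m z]
  exact ENNReal.div_add_div_mul_div_le _ _ (extensionMass_child_le m z b) hchildren

end ExtensionMass

theorem proportional_splitting_general (m : List Bool → ℝ≥0∞)
    (M : List Bool → ℝ≥0∞) (hM : ∀ z : List Bool, M z = ∑' u : List Bool, m (z ++ u))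
    (a : List Bool → ℝ≥0∞) (ha0 : a [] = 1)
    (ha : ∀ (z : List Bool) (b : Bool),
      a (z ++ [b]) = a z * (M (z ++ [b]) / (M (z ++ [false]) + M (z ++ [true])))) :
    ∀ ω : ℕ → Bool, ∑' n : ℕ, m (prefixSeq ω n) / a (prefixSeq ω n) ≤ M [] := by
  intro ω
  obtain rfl : M = extensionMass m := funext hM
  rcases eq_or_ne (extensionMass m []) ∞ with htop | htop
  · simp [htop]
  refine ENNReal.tsum_le_of_sum_range_le fun n => ?_
  calc ∑ k ∈ Finset.range n, m (prefixSeq ω k) / a (prefixSeq ω k)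
      _ ≤ ∑ k ∈ Finset.range n, m (prefixSeq ω k) / a (prefixSeq ω k)
          + extensionMass m (prefixSeq ω n) / a (prefixSeq ω n) := le_self_add
      _ ≤ extensionMass m (prefixSeq ω 0) / a (prefixSeq ω 0) :=
        Finset.sum_range_add_le_of_add_le
          (g := fun k => extensionMass m (prefixSeq ω k) / a (prefixSeq ω k)) (fun k => by
            rw [prefixSeq_succ]; exact div_add_extensionMass_div_le m ha htop _ (ω k)) n
      _ = extensionMass m [] := by rw [prefixSeq_zero, ha0, div_one]

/-- Proportional-splitting bound: the core of the proof of Proposition 1. -/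
theorem proportional_splitting (m : List Bool → ℝ≥0∞) (hm : DiscreteSemimeasure m)
    (M : List Bool → ℝ≥0∞) (hM : ∀ z : List Bool, M z = ∑' u : List Bool, m (z ++ u))
    (a : List Bool → ℝ≥0∞) (ha0 : a [] = 1)
    (ha : ∀ (z : List Bool) (b : Bool),
      a (z ++ [b]) = a z * (M (z ++ [b]) / (M (z ++ [false]) + M (z ++ [true])))) :
    ∀ ω : ℕ → Bool, ∑' n : ℕ, m (prefixSeq ω n) / a (prefixSeq ω n) ≤ M [] :=
  proportional_splitting_general m M hM a ha0 ha
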